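/- arXiv:1205.3435 — 7 statements merged into one kernel-verified Lean document; each statement's English description precedes it below -/
import Mathlib

section
/- Let b, c ∈ {0,…,ℓ} and let u ∈ 𝒜^ℓ with H(u) = b. Then the sum Σ_{w : H(w)=c} M(u,w) does not depend on the choice of u in H^{−1}({b}), and it equals M_H(b,c) = Σ_{0≤k≤ℓ−b, 0≤h≤b, k−h=c−b} C(ℓ−b,k)·C(b,h)·(p(1−1/κ))^k·(1−p(1−1/κ))^{ℓ−b−k}·(p/κ)^h·(1−p/κ)^{b−h}. -/
open Finset

noncomputable section

/-- The mutation matrix on chromosomes of length `ℓ` over the alphabet `𝒜`. -/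
def mutM (𝒜 : Type) [DecidableEq 𝒜] [Fintype 𝒜] {ℓ : ℕ} (q : ℝ)
    (u v : Fin ℓ → 𝒜) : ℝ :=
  ∏ j : Fin ℓ,
    ((1 - q) * (if u j = v j then 1 else 0)
      + (q / ((Fintype.card 𝒜 : ℝ) - 1)) * (if u j = v j then 0 else 1))

/-- Hamming distance from `u` to the master sequence `w`. -/
def hamH (𝒜 : Type) [DecidableEq 𝒜] {ℓ : ℕ} (w u : Fin ℓ → 𝒜) : ℕ :=
  (Finset.univ.filter (fun j => u j ≠ w j)).card

/-- The lumped mutation matrix `M_H`. -/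
def MH (ℓ κ : ℕ) (p : ℝ) (b c : ℕ) : ℝ :=
  ∑ k ∈ Finset.range (ℓ - b + 1), ∑ h ∈ Finset.range (b + 1),
    if (k : ℤ) - (h : ℤ) = (c : ℤ) - (b : ℤ) then
      (Nat.choose (ℓ - b) k : ℝ) * (Nat.choose b h : ℝ)
        * (p * (1 - 1 / (κ : ℝ))) ^ k
        * (1 - p * (1 - 1 / (κ : ℝ))) ^ (ℓ - b - k)
        * (p / (κ : ℝ)) ^ h * (1 - p / (κ : ℝ)) ^ (b - h)
    else 0

open Polynomial in
lemma binom_pow_expand (x y : ℝ) (m : ℕ) :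
    ((C y * X + C x) ^ m : ℝ[X])
      = ∑ k ∈ Finset.range (m+1), C ((m.choose k : ℝ) * y^k * x^(m-k)) * X ^ k := by
  rw [add_pow]
  refine Finset.sum_congr rfl fun k hk => ?_
  simp only [mul_pow, ← C_pow, ← C_eq_natCast, C_mul]
  ring

open Polynomial in
lemma coeff_binom_pow_mul (x y r s : ℝ) (m b c : ℕ) :
    (((C y * X + C x) ^ m * (C s * X + C r) ^ b : ℝ[X])).coeff c
      = ∑ k ∈ Finset.range (m+1), ∑ i ∈ Finset.range (b+1),
          if k + i = c then
            (m.choose k : ℝ) * (b.choose i : ℝ) * y^k * x^(m-k) * s^i * r^(b-i)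
          else 0 := by
  rw [binom_pow_expand, binom_pow_expand, Finset.sum_mul_sum,
    Polynomial.finset_sum_coeff]
  refine Finset.sum_congr rfl fun k hk => ?_
  rw [Polynomial.finset_sum_coeff]
  refine Finset.sum_congr rfl fun i hi => ?_
  have h1 : (C ((m.choose k : ℝ) * y ^ k * x ^ (m - k)) * X ^ k)
        * (C ((b.choose i : ℝ) * s ^ i * r ^ (b - i)) * X ^ i)
      = C (((m.choose k : ℝ) * y ^ k * x ^ (m - k))
            * ((b.choose i : ℝ) * s ^ i * r ^ (b - i))) * X ^ (k + i) := by
    simp only [C_mul, pow_add]; ring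
  rw [h1, coeff_C_mul, coeff_X_pow, mul_ite, mul_one, mul_zero]
  split_ifs with h2 h3 h3 <;> first | ring1 | (exfalso; omega)

theorem lumped_mutation_matrix
    (𝒜 : Type) [DecidableEq 𝒜] [Fintype 𝒜] (hκ : 2 ≤ Fintype.card 𝒜)
    (ℓ : ℕ) (hℓ : 1 ≤ ℓ)
    (q : ℝ) (hq : 0 < q ∧ q < 1 - 1 / (Fintype.card 𝒜 : ℝ))
    (p : ℝ) (hp : p = (Fintype.card 𝒜 : ℝ) * q / ((Fintype.card 𝒜 : ℝ) - 1))
    (w : Fin ℓ → 𝒜)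
    (b c : ℕ) (hb : b ≤ ℓ) (hc : c ≤ ℓ)
    (u : Fin ℓ → 𝒜) (hu : hamH 𝒜 w u = b) :
    ∑ v ∈ Finset.univ.filter (fun v : Fin ℓ → 𝒜 => hamH 𝒜 w v = c), mutM 𝒜 q u v
      = MH ℓ (Fintype.card 𝒜) p b c := by
  classical
  open Polynomial in
  have hκ2 : (2 : ℝ) ≤ (Fintype.card 𝒜 : ℝ) := by exact_mod_cast hκ
  set κ : ℝ := (Fintype.card 𝒜 : ℝ) with hκdef
  have hκ0 : κ ≠ 0 := by linarith
  have hκ1 : κ - 1 ≠ 0 := by linarith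
  set q' : ℝ := q / (κ - 1) with hq'def
  -- substitutions for MH
  have hpq : p * (1 - 1 / κ) = q := by rw [hp]; field_simp
  have hpk : p / κ = q' := by rw [hp, hq'def]; field_simp
  -- per-coordinate weight/exponent
  set F : Fin ℓ → 𝒜 → ℝ := fun j a =>
    (1 - q) * (if u j = a then 1 else 0) + q' * (if u j = a then 0 else 1) with hF
  set e : Fin ℓ → 𝒜 → ℕ := fun j a => if a = w j then 0 else 1 with he
  set P : ℝ[X] := ∏ j : Fin ℓ, ∑ a : 𝒜, C (F j a) * X ^ (e j a) with hP
  -- Step 1 : P as a sum over sequences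
  have step1 : P = ∑ v : Fin ℓ → 𝒜, C (mutM 𝒜 q u v) * X ^ (hamH 𝒜 w v) := by
    rw [hP, Fintype.prod_sum]
    refine Finset.sum_congr rfl fun v _ => ?_
    have hM : mutM 𝒜 q u v = ∏ j, F j (v j) := rfl
    have hHam : hamH 𝒜 w v = ∑ j, e j (v j) := by
      rw [hamH, Finset.card_filter]
      refine Finset.sum_congr rfl fun j _ => ?_
      simp only [he]
      split_ifs with h1 h2 h2 <;> first | rfl | (exfalso; exact h2 h1) | tauto
    rw [hM, hHam, Finset.prod_mul_distrib, ← map_prod, Finset.prod_pow_eq_pow_sum]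
  -- Step 2 : per-coordinate factors
  have step2a : ∀ j, u j = w j →
      (∑ a : 𝒜, C (F j a) * X ^ (e j a)) = C q * X + C (1 - q) := by
    intro j hj
    rw [← Finset.add_sum_erase _ _ (Finset.mem_univ (w j))]
    have h0 : C (F j (w j)) * X ^ (e j (w j)) = C (1 - q) := by
      simp [hF, he, hj]
    have h1 : ∀ a ∈ Finset.univ.erase (w j),
        C (F j a) * X ^ (e j a) = C q' * X := by
      intro a ha
      have ha' : a ≠ w j := (Finset.mem_erase.mp ha).1
      have : u j ≠ a := by rw [hj]; exact fun h => ha' h.symm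
      simp [hF, he, this, ha']
    rw [Finset.sum_congr rfl h1, Finset.sum_const,
      Finset.card_erase_of_mem (Finset.mem_univ _), Finset.card_univ]
    have hcard : ((Fintype.card 𝒜 - 1 : ℕ) : ℝ) = κ - 1 := by
      push_cast [Nat.cast_sub (by omega : 1 ≤ Fintype.card 𝒜)]
      rfl
    rw [h0, nsmul_eq_mul, ← C_eq_natCast]
    have : (C ((Fintype.card 𝒜 - 1 : ℕ) : ℝ) : ℝ[X]) * (C q' * X) = C q * X := by
      rw [← mul_assoc, ← C_mul, hcard, hq'def]
      congr 2
      field_simp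
    rw [this, add_comm]
  have step2b : ∀ j, u j ≠ w j →
      (∑ a : 𝒜, C (F j a) * X ^ (e j a)) = C (1 - q') * X + C q' := by
    intro j hj
    rw [← Finset.add_sum_erase _ _ (Finset.mem_univ (w j))]
    have huj : u j ∈ Finset.univ.erase (w j) := Finset.mem_erase.mpr ⟨hj, Finset.mem_univ _⟩
    rw [← Finset.add_sum_erase _ _ huj]
    have h0 : C (F j (w j)) * X ^ (e j (w j)) = C q' := by
      simp [hF, he, hj]
    have h1 : C (F j (u j)) * X ^ (e j (u j)) = C (1 - q) * X := by
      have : u j ≠ w j := hj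
      simp [hF, he, this]
    have h2 : ∀ a ∈ (Finset.univ.erase (w j)).erase (u j),
        C (F j a) * X ^ (e j a) = C q' * X := by
      intro a ha
      have ha1 : a ≠ u j := (Finset.mem_erase.mp ha).1
      have ha2 : a ≠ w j := (Finset.mem_erase.mp (Finset.mem_erase.mp ha).2).1
      have : u j ≠ a := fun h => ha1 h.symm
      simp [hF, he, this, ha2]
    rw [Finset.sum_congr rfl h2, Finset.sum_const, h0, h1,
      Finset.card_erase_of_mem huj,
      Finset.card_erase_of_mem (Finset.mem_univ _), Finset.card_univ]
    have hcard : ((Fintype.card 𝒜 - 1 - 1 : ℕ) : ℝ) = κ - 2 := by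
      push_cast [Nat.cast_sub (by omega : 1 ≤ Fintype.card 𝒜 - 1),
        Nat.cast_sub (by omega : 1 ≤ Fintype.card 𝒜)]
      ring
    rw [nsmul_eq_mul, ← C_eq_natCast]
    have : C (1 - q) * X + (C ((Fintype.card 𝒜 - 1 - 1 : ℕ) : ℝ) : ℝ[X]) * (C q' * X)
        = C (1 - q') * X := by
      rw [← mul_assoc, ← C_mul, hcard, ← add_mul, ← C_add]
      congr 2
      rw [hq'def]
      field_simp
      ring
    rw [this, add_comm]
  -- Step 3 : P as a product of two binomial powers
  have hcards : (Finset.univ.filter (fun j : Fin ℓ => u j = w j)).card = ℓ - b := by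
    have h1 : (Finset.univ.filter (fun j : Fin ℓ => u j = w j)).card
        + (Finset.univ.filter (fun j : Fin ℓ => ¬ (u j = w j))).card = ℓ := by
      rw [Finset.card_filter_add_card_filter_not, Finset.card_univ, Fintype.card_fin]
    have h2 : (Finset.univ.filter (fun j : Fin ℓ => ¬ (u j = w j))).card = b := by
      rw [← hu, hamH]
    omega
  have hcardb : (Finset.univ.filter (fun j : Fin ℓ => ¬ (u j = w j))).card = b := by
    rw [← hu, hamH]
  have step3 : P = (C q * X + C (1 - q)) ^ (ℓ - b) * (C (1 - q') * X + C q') ^ b := by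
    rw [hP, ← Finset.prod_filter_mul_prod_filter_not Finset.univ (fun j => u j = w j)]
    congr 1
    · rw [Finset.prod_congr rfl (fun j hj => step2a j (Finset.mem_filter.mp hj).2),
        Finset.prod_const, hcards]
    · rw [Finset.prod_congr rfl (fun j hj => step2b j (Finset.mem_filter.mp hj).2),
        Finset.prod_const, hcardb]
  -- Step 4 : compare coefficients
  have lhs_eq : P.coeff c
      = ∑ v ∈ Finset.univ.filter (fun v : Fin ℓ → 𝒜 => hamH 𝒜 w v = c), mutM 𝒜 q u v := by
    rw [step1, Polynomial.finset_sum_coeff, Finset.sum_filter]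
    refine Finset.sum_congr rfl fun v _ => ?_
    rw [coeff_C_mul, coeff_X_pow, mul_ite, mul_one, mul_zero]
    exact if_congr eq_comm rfl rfl
  have rhs_eq : P.coeff c = MH ℓ (Fintype.card 𝒜) p b c := by
    rw [step3, coeff_binom_pow_mul, MH, hpq, hpk]
    refine Finset.sum_congr rfl fun k hk => ?_
    rw [← Finset.sum_range_reflect]
    refine Finset.sum_congr rfl fun h hh => ?_
    have hhb : h ≤ b := by
      simp only [Finset.mem_range] at hh; omega
    have hb1 : b + 1 - 1 - h = b - h := by omega
    rw [hb1]
    have hiff : (k + (b - h) = c) ↔ ((k : ℤ) - (h : ℤ) = (c : ℤ) - (b : ℤ)) := by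
      omega
    rw [if_congr hiff rfl rfl]
    split_ifs with hcond
    · rw [Nat.choose_symm hhb, Nat.sub_sub_self hhb]
      ring
    · rfl
  rw [← lhs_eq, ← rhs_eq]

end
end

section
/- The normalized Moran transition matrix P is lumpable with respect to the map ℍ: for every e ∈ {0,…,ℓ}^m and all populations x, y ∈ (𝒜^ℓ)^m with ℍ(x) = ℍ(y), one has Σ_{z : ℍ(z)=e} P(x,z) = Σ_{z : ℍ(z)=e} P(y,z). -/
open Finset

noncomputable section

/-- The sharp peak fitness function with master sequence `w`. -/
def fitA (𝒜 : Type) [DecidableEq 𝒜] {ℓ : ℕ} (σ : ℝ) (w u : Fin ℓ → 𝒜) : ℝ :=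
  if u = w then σ else 1

/-- Off-diagonal entries of the normalized Moran transition matrix. -/
def moranNOff (𝒜 : Type) [DecidableEq 𝒜] [Fintype 𝒜] {ℓ m : ℕ} (q σ : ℝ)
    (w : Fin ℓ → 𝒜) (x y : Fin m → Fin ℓ → 𝒜) : ℝ :=
  (1 / (m : ℝ)) *
    ∑ j : Fin m, ∑ u : Fin ℓ → 𝒜,
      (if u ≠ x j ∧ y = Function.update x j u then
        (∑ i : Fin m, fitA 𝒜 σ w (x i) * mutM 𝒜 q (x i) u)
          / (∑ i : Fin m, fitA 𝒜 σ w (x i))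
      else 0)

/-- The normalized Moran transition matrix `P` on populations. -/
def moranN (𝒜 : Type) [DecidableEq 𝒜] [Fintype 𝒜] {ℓ m : ℕ} (q σ : ℝ)
    (w : Fin ℓ → 𝒜) (x y : Fin m → Fin ℓ → 𝒜) : ℝ :=
  if y = x then
    1 - ∑ z ∈ Finset.univ.filter (fun z => z ≠ x), moranNOff 𝒜 q σ w x z
  else moranNOff 𝒜 q σ w x y

/-- The vector of Hamming distances of the chromosomes of a population. -/
def bbH (𝒜 : Type) [DecidableEq 𝒜] {ℓ m : ℕ} (w : Fin ℓ → 𝒜)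
    (x : Fin m → Fin ℓ → 𝒜) : Fin m → ℕ :=
  fun i => hamH 𝒜 w (x i)

section Aux

variable (𝒜 : Type) [DecidableEq 𝒜] [Fintype 𝒜] {ℓ m : ℕ} (q σ : ℝ) (w : Fin ℓ → 𝒜)

lemma hamH_eq_zero_iff (u : Fin ℓ → 𝒜) : hamH 𝒜 w u = 0 ↔ u = w := by
  unfold hamH
  rw [Finset.card_eq_zero, Finset.filter_eq_empty_iff]
  constructor
  · intro h; funext j; simpa using h (Finset.mem_univ j)
  · intro h j _; simp [h]

lemma fitA_eq_of_hamH {u u' : Fin ℓ → 𝒜} (h : hamH 𝒜 w u = hamH 𝒜 w u') :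
    fitA 𝒜 σ w u = fitA 𝒜 σ w u' := by
  unfold fitA
  by_cases hu : u = w
  · rw [if_pos hu, if_pos]
    rw [← hamH_eq_zero_iff 𝒜 w, ← h, hamH_eq_zero_iff 𝒜 w]; exact hu
  · rw [if_neg hu, if_neg]
    rw [← hamH_eq_zero_iff 𝒜 w, ← h, hamH_eq_zero_iff 𝒜 w]; exact hu

lemma perm_exists {β : Type} [DecidableEq β] (a b a' b' : β) (h : a = b ↔ a' = b') :
    ∃ s : Equiv.Perm β, s a = a' ∧ s b = b' := by
  by_cases hab : a = b
  · refine ⟨Equiv.swap a a', ?_, ?_⟩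
    · simp
    · rw [← hab, Equiv.swap_apply_left, h.mp hab]
  · have hab' : a' ≠ b' := fun hc => hab (h.mpr hc)
    have h1 : Equiv.swap a a' b ≠ a' := by
      intro hc
      exact hab ((Equiv.swap a a').injective ((Equiv.swap_apply_left a a').trans hc.symm))
    refine ⟨(Equiv.swap a a').trans (Equiv.swap (Equiv.swap a a' b) b'), ?_, ?_⟩
    · simp only [Equiv.trans_apply, Equiv.swap_apply_left]
      exact Equiv.swap_apply_of_ne_of_ne (Ne.symm h1) hab'
    · simp only [Equiv.trans_apply, Equiv.swap_apply_left]

lemma hamH_eq_sum (u : Fin ℓ → 𝒜) :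
    (hamH 𝒜 w u : ℕ) = ∑ j : Fin ℓ, if u j ≠ w j then 1 else 0 := by
  unfold hamH
  rw [Finset.card_filter]

lemma exists_isometry {v v' : Fin ℓ → 𝒜} (h : hamH 𝒜 w v = hamH 𝒜 w v') :
    ∃ G : (Fin ℓ → 𝒜) ≃ (Fin ℓ → 𝒜), G v = v' ∧
      (∀ u, hamH 𝒜 w (G u) = hamH 𝒜 w u) ∧
      (∀ u u', mutM 𝒜 q (G u) (G u') = mutM 𝒜 q u u') := by
  classical
  have hc : Fintype.card {j // v j ≠ w j} = Fintype.card {j // v' j ≠ w j} := by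
    simpa [Fintype.card_subtype, hamH] using h
  obtain ⟨e0⟩ := Fintype.card_eq.mp hc
  set π : Equiv.Perm (Fin ℓ) := e0.extendSubtype with hπdef
  have hπ : ∀ j, v j ≠ w j ↔ v' (π j) ≠ w (π j) := by
    intro j
    constructor
    · intro hj; exact e0.extendSubtype_mem j hj
    · intro hj heq
      exact e0.extendSubtype_not_mem j (fun hne => hne heq) hj
  -- per-site alphabet permutations
  have hiff : ∀ j, w j = v j ↔ w (π j) = v' (π j) := by
    intro j
    rw [eq_comm, eq_comm (a := w (π j))]
    exact not_iff_not.mp (hπ j)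
  choose s hs1 hs2 using fun j => perm_exists (w j) (v j) (w (π j)) (v' (π j)) (hiff j)
  refine ⟨{
    toFun := fun u j => s (π.symm j) (u (π.symm j))
    invFun := fun u j => (s j).symm (u (π j))
    left_inv := by
      intro u; funext j
      simp
    right_inv := by
      intro u; funext j
      simp }, ?_, ?_, ?_⟩
  · funext j
    have := hs2 (π.symm j)
    rwa [π.apply_symm_apply] at this
  · intro u
    have key : ∀ j, (s (π.symm j) (u (π.symm j)) ≠ w j) ↔ (u (π.symm j) ≠ w (π.symm j)) := by
      intro j
      have hw : w j = s (π.symm j) (w (π.symm j)) := by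
        have := hs1 (π.symm j); rw [π.apply_symm_apply] at this; exact this.symm
      rw [hw]
      exact not_congr (Equiv.apply_eq_iff_eq _)
    rw [hamH_eq_sum, hamH_eq_sum]
    simp only [Equiv.coe_fn_mk]
    calc (∑ j : Fin ℓ, if s (π.symm j) (u (π.symm j)) ≠ w j then 1 else 0)
        = ∑ j : Fin ℓ, (if u (π.symm j) ≠ w (π.symm j) then 1 else 0) :=
          Finset.sum_congr rfl fun j _ => by rw [if_congr (key j) rfl rfl]
      _ = ∑ j : Fin ℓ, (if u j ≠ w j then 1 else 0) :=
          Equiv.sum_comp π.symm (fun j => if u j ≠ w j then 1 else 0)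
  · intro u u'
    unfold mutM
    simp only [Equiv.coe_fn_mk]
    calc (∏ j : Fin ℓ, ((1 - q) * (if s (π.symm j) (u (π.symm j)) = s (π.symm j) (u' (π.symm j)) then 1 else 0)
          + (q / ((Fintype.card 𝒜 : ℝ) - 1)) * (if s (π.symm j) (u (π.symm j)) = s (π.symm j) (u' (π.symm j)) then 0 else 1)))
        = ∏ j : Fin ℓ, ((1 - q) * (if u (π.symm j) = u' (π.symm j) then 1 else 0)
          + (q / ((Fintype.card 𝒜 : ℝ) - 1)) * (if u (π.symm j) = u' (π.symm j) then 0 else 1)) := by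
          refine Finset.prod_congr rfl fun j _ => ?_
          rw [if_congr (Equiv.apply_eq_iff_eq _) rfl rfl, if_congr (Equiv.apply_eq_iff_eq _) rfl rfl]
      _ = ∏ j : Fin ℓ, ((1 - q) * (if u j = u' j then 1 else 0)
          + (q / ((Fintype.card 𝒜 : ℝ) - 1)) * (if u j = u' j then 0 else 1)) :=
          Equiv.prod_comp π.symm (fun j => (1 - q) * (if u j = u' j then 1 else 0)
            + (q / ((Fintype.card 𝒜 : ℝ) - 1)) * (if u j = u' j then 0 else 1))

lemma mut_lump {v v' : Fin ℓ → 𝒜} (h : hamH 𝒜 w v = hamH 𝒜 w v') (g : ℕ → ℝ) :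
    ∑ u : Fin ℓ → 𝒜, g (hamH 𝒜 w u) * mutM 𝒜 q v u
      = ∑ u : Fin ℓ → 𝒜, g (hamH 𝒜 w u) * mutM 𝒜 q v' u := by
  obtain ⟨G, hGv, hH, hM⟩ := exists_isometry 𝒜 q w h
  calc ∑ u : Fin ℓ → 𝒜, g (hamH 𝒜 w u) * mutM 𝒜 q v u
      = ∑ u : Fin ℓ → 𝒜, g (hamH 𝒜 w (G u)) * mutM 𝒜 q v' (G u) := by
        refine Finset.sum_congr rfl fun u _ => ?_
        rw [hH, ← hGv, hM]
    _ = ∑ u : Fin ℓ → 𝒜, g (hamH 𝒜 w u) * mutM 𝒜 q v' u :=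
        Equiv.sum_comp G (fun u => g (hamH 𝒜 w u) * mutM 𝒜 q v' u)

/-- The probability weight used in the Moran transition matrix. -/
def fv (x : Fin m → Fin ℓ → 𝒜) (u : Fin ℓ → 𝒜) : ℝ :=
  (∑ i : Fin m, fitA 𝒜 σ w (x i) * mutM 𝒜 q (x i) u)
    / (∑ i : Fin m, fitA 𝒜 σ w (x i))

lemma bbH_update (x : Fin m → Fin ℓ → 𝒜) (j : Fin m) (u : Fin ℓ → 𝒜) :
    bbH 𝒜 w (Function.update x j u) = Function.update (bbH 𝒜 w x) j (hamH 𝒜 w u) := by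
  funext i
  simp [bbH, Function.update_apply, apply_ite (hamH 𝒜 w)]

lemma off_self (x : Fin m → Fin ℓ → 𝒜) : moranNOff 𝒜 q σ w x x = 0 := by
  unfold moranNOff
  rw [mul_eq_zero]; right
  refine Finset.sum_eq_zero fun j _ => Finset.sum_eq_zero fun u _ => ?_
  rw [if_neg]
  rintro ⟨hu, hx⟩
  exact hu ((congrFun hx j).trans (Function.update_self j u x)).symm

lemma moranN_eq (x z : Fin m → Fin ℓ → 𝒜) :
    moranN 𝒜 q σ w x z = moranNOff 𝒜 q σ w x z
      + (if z = x then 1 - ∑ z' : Fin m → Fin ℓ → 𝒜, moranNOff 𝒜 q σ w x z' else 0) := by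
  unfold moranN
  by_cases hz : z = x
  · rw [if_pos hz, if_pos hz, hz, off_self, zero_add]
    congr 1
    rw [Finset.filter_ne']
    rw [← Finset.sum_erase_add Finset.univ _ (Finset.mem_univ x), off_self, add_zero]
  · rw [if_neg hz, if_neg hz, add_zero]

lemma sum_ite_point {α : Type} [DecidableEq α] (s : Finset α) (c : α)
    (P : Prop) [Decidable P] (A : ℝ) :
    (∑ z ∈ s, if P ∧ z = c then A else 0) = if P ∧ c ∈ s then A else 0 := by
  by_cases hP : P
  · simp only [hP, true_and]
    exact Finset.sum_ite_eq' s c (fun _ => A)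
  · simp [hP]

lemma sum_off_filter (x : Fin m → Fin ℓ → 𝒜)
    (p : (Fin m → Fin ℓ → 𝒜) → Prop) [DecidablePred p] :
    ∑ z ∈ Finset.univ.filter p, moranNOff 𝒜 q σ w x z
      = (1/(m:ℝ)) * ∑ j : Fin m, ∑ u : Fin ℓ → 𝒜,
          (if u ≠ x j ∧ p (Function.update x j u) then fv 𝒜 q σ w x u else 0) := by
  unfold moranNOff fv
  rw [← Finset.mul_sum]
  congr 1
  rw [Finset.sum_comm]
  refine Finset.sum_congr rfl fun j _ => ?_
  rw [Finset.sum_comm]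
  refine Finset.sum_congr rfl fun u _ => ?_
  rw [sum_ite_point]
  simp only [Finset.mem_filter, Finset.mem_univ, true_and]

lemma key_identity (x : Fin m → Fin ℓ → 𝒜) (e : Fin m → ℕ) :
    ∑ z ∈ Finset.univ.filter (fun z : Fin m → Fin ℓ → 𝒜 => bbH 𝒜 w z = e),
        moranN 𝒜 q σ w x z
      = (if bbH 𝒜 w x = e then (1:ℝ) else 0)
        + (1/(m:ℝ)) * ∑ j : Fin m, ∑ u : Fin ℓ → 𝒜,
            ((if Function.update (bbH 𝒜 w x) j (hamH 𝒜 w u) = e then (1:ℝ) else 0)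
              - (if bbH 𝒜 w x = e then (1:ℝ) else 0)) * fv 𝒜 q σ w x u := by
  have h1 : ∑ z ∈ Finset.univ.filter (fun z : Fin m → Fin ℓ → 𝒜 => bbH 𝒜 w z = e),
        moranN 𝒜 q σ w x z
      = (∑ z ∈ Finset.univ.filter (fun z : Fin m → Fin ℓ → 𝒜 => bbH 𝒜 w z = e),
          moranNOff 𝒜 q σ w x z)
        + (if bbH 𝒜 w x = e then
            (1 - ∑ z' : Fin m → Fin ℓ → 𝒜, moranNOff 𝒜 q σ w x z') else 0) := by
    rw [Finset.sum_congr rfl (fun z _ => moranN_eq 𝒜 q σ w x z), Finset.sum_add_distrib,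
      Finset.sum_ite_eq' _ x _]
    simp only [Finset.mem_filter, Finset.mem_univ, true_and]
  have h2 := sum_off_filter 𝒜 q σ w x (fun z => bbH 𝒜 w z = e)
  simp only [bbH_update] at h2
  have h3 : ∑ z' : Fin m → Fin ℓ → 𝒜, moranNOff 𝒜 q σ w x z'
      = (1/(m:ℝ)) * ∑ j : Fin m, ∑ u : Fin ℓ → 𝒜,
          (if u ≠ x j then fv 𝒜 q σ w x u else 0) := by
    have := sum_off_filter 𝒜 q σ w x (fun _ => True)
    simpa using this
  rw [h1, h2, h3]
  have hterm : ∀ (j : Fin m) (u : Fin ℓ → 𝒜),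
      ((if Function.update (bbH 𝒜 w x) j (hamH 𝒜 w u) = e then (1:ℝ) else 0)
          - (if bbH 𝒜 w x = e then (1:ℝ) else 0)) * fv 𝒜 q σ w x u
        = (if u ≠ x j ∧ Function.update (bbH 𝒜 w x) j (hamH 𝒜 w u) = e
            then fv 𝒜 q σ w x u else 0)
          - (if bbH 𝒜 w x = e then (1:ℝ) else 0)
            * (if u ≠ x j then fv 𝒜 q σ w x u else 0) := by
    intro j u
    by_cases hu : u = x j
    · have hb : Function.update (bbH 𝒜 w x) j (hamH 𝒜 w (x j)) = bbH 𝒜 w x :=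
        Function.update_eq_self j (bbH 𝒜 w x)
      rw [hu, hb]
      simp
    · simp only [ne_eq, hu, not_false_eq_true, true_and, if_true]
      split_ifs <;> ring
  have hsum : ∑ j : Fin m, ∑ u : Fin ℓ → 𝒜,
      ((if Function.update (bbH 𝒜 w x) j (hamH 𝒜 w u) = e then (1:ℝ) else 0)
        - (if bbH 𝒜 w x = e then (1:ℝ) else 0)) * fv 𝒜 q σ w x u
      = (∑ j : Fin m, ∑ u : Fin ℓ → 𝒜,
          (if u ≠ x j ∧ Function.update (bbH 𝒜 w x) j (hamH 𝒜 w u) = e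
            then fv 𝒜 q σ w x u else 0))
        - (if bbH 𝒜 w x = e then (1:ℝ) else 0)
          * ∑ j : Fin m, ∑ u : Fin ℓ → 𝒜, (if u ≠ x j then fv 𝒜 q σ w x u else 0) := by
    rw [Finset.sum_congr rfl (fun j _ => Finset.sum_congr rfl (fun u _ => hterm j u))]
    simp only [Finset.sum_sub_distrib, Finset.mul_sum]
  rw [hsum]
  by_cases hP : bbH 𝒜 w x = e <;> simp [hP] <;> ring

lemma fv_lump (x y : Fin m → Fin ℓ → 𝒜) (hxy : bbH 𝒜 w x = bbH 𝒜 w y) (G : ℕ → ℝ) :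
    ∑ u : Fin ℓ → 𝒜, G (hamH 𝒜 w u) * fv 𝒜 q σ w x u
      = ∑ u : Fin ℓ → 𝒜, G (hamH 𝒜 w u) * fv 𝒜 q σ w y u := by
  have hfit : ∀ i, fitA 𝒜 σ w (x i) = fitA 𝒜 σ w (y i) :=
    fun i => fitA_eq_of_hamH 𝒜 σ w (congrFun hxy i)
  have hns : (∑ i : Fin m, fitA 𝒜 σ w (x i)) = ∑ i : Fin m, fitA 𝒜 σ w (y i) :=
    Finset.sum_congr rfl fun i _ => hfit i
  unfold fv
  simp only [← mul_div_assoc]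
  rw [← Finset.sum_div, ← Finset.sum_div, hns]
  congr 1
  simp only [Finset.mul_sum]
  rw [Finset.sum_comm]
  conv_rhs => rw [Finset.sum_comm]
  refine Finset.sum_congr rfl fun i _ => ?_
  have hl := mut_lump 𝒜 q w (congrFun hxy i : hamH 𝒜 w (x i) = hamH 𝒜 w (y i))
    (fun h => G h * fitA 𝒜 σ w (x i))
  calc ∑ u : Fin ℓ → 𝒜, G (hamH 𝒜 w u) * (fitA 𝒜 σ w (x i) * mutM 𝒜 q (x i) u)
      = ∑ u : Fin ℓ → 𝒜, (G (hamH 𝒜 w u) * fitA 𝒜 σ w (x i)) * mutM 𝒜 q (x i) u := by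
        refine Finset.sum_congr rfl fun u _ => ?_; ring
    _ = ∑ u : Fin ℓ → 𝒜, (G (hamH 𝒜 w u) * fitA 𝒜 σ w (x i)) * mutM 𝒜 q (y i) u := hl
    _ = ∑ u : Fin ℓ → 𝒜, G (hamH 𝒜 w u) * (fitA 𝒜 σ w (y i) * mutM 𝒜 q (y i) u) := by
        refine Finset.sum_congr rfl fun u _ => ?_; rw [hfit i] at *; ring

end Aux

theorem moranN_lumpable
    (𝒜 : Type) [DecidableEq 𝒜] [Fintype 𝒜] (hκ : 2 ≤ Fintype.card 𝒜)
    (ℓ m : ℕ) (hℓ : 1 ≤ ℓ) (hm : 1 ≤ m)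
    (q : ℝ) (hq : 0 < q ∧ q < 1 - 1 / (Fintype.card 𝒜 : ℝ))
    (σ : ℝ) (hσ : 1 < σ) (w : Fin ℓ → 𝒜)
    (e : Fin m → ℕ) (x y : Fin m → Fin ℓ → 𝒜)
    (hxy : bbH 𝒜 w x = bbH 𝒜 w y) :
    ∑ z ∈ Finset.univ.filter (fun z : Fin m → Fin ℓ → 𝒜 => bbH 𝒜 w z = e),
        moranN 𝒜 q σ w x z
      = ∑ z ∈ Finset.univ.filter (fun z : Fin m → Fin ℓ → 𝒜 => bbH 𝒜 w z = e),
          moranN 𝒜 q σ w y z := by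
  rw [key_identity 𝒜 q σ w x e, key_identity 𝒜 q σ w y e, hxy]
  congr 1
  congr 1
  refine Finset.sum_congr rfl fun j _ => ?_
  exact fv_lump 𝒜 q σ w x y hxy
    (fun h => (if Function.update (bbH 𝒜 w y) j h = e then (1:ℝ) else 0)
      - (if bbH 𝒜 w y = e then (1:ℝ) else 0))

end
end

section
/- The distance transition matrix p_H is lumpable with respect to the map 𝒪_H: for every o ∈ 𝒫^m_{ℓ+1} and all d, e ∈ {0,…,ℓ}^m with 𝒪_H(d) = 𝒪_H(e), one has Σ_{f : 𝒪_H(f)=o} p_H(d,f) = Σ_{f : 𝒪_H(f)=o} p_H(e,f). -/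
open Finset

noncomputable section

/-- The lumped fitness function `A_H`. -/
def AH (σ : ℝ) (b : ℕ) : ℝ := if b = 0 then σ else 1

/-- Off-diagonal entries of the distance transition matrix `p_H`. -/
def pHOff (ℓ m κ : ℕ) (p σ : ℝ) (d e : Fin m → Fin (ℓ + 1)) : ℝ :=
  (1 / (m : ℝ)) *
    ∑ j : Fin m, ∑ c : Fin (ℓ + 1),
      (if c ≠ d j ∧ e = Function.update d j c then
        (∑ i : Fin m, AH σ (d i) * MH ℓ κ p (d i) c)
          / (∑ i : Fin m, AH σ (d i))
      else 0)

/-- The distance transition matrix `p_H` on `{0,…,ℓ}^m`. -/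
def pHmat (ℓ m κ : ℕ) (p σ : ℝ) (d e : Fin m → Fin (ℓ + 1)) : ℝ :=
  if e = d then
    1 - ∑ f ∈ Finset.univ.filter (fun f => f ≠ d), pHOff ℓ m κ p σ d f
  else pHOff ℓ m κ p σ d e

/-- The occupancy distribution of a distance vector. -/
def occH (ℓ m : ℕ) (d : Fin m → Fin (ℓ + 1)) : Fin (ℓ + 1) → ℕ :=
  fun l => (Finset.univ.filter (fun i => d i = l)).card


lemma comp_perm_cancel {m : ℕ} {α : Type*} (π : Equiv.Perm (Fin m)) {a b : Fin m → α}
    (h : a ∘ π = b ∘ π) : a = b :=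
  π.surjective.injective_comp_right h

lemma occH_comp (ℓ m : ℕ) (g : Fin m → Fin (ℓ + 1)) (π : Equiv.Perm (Fin m)) :
    occH ℓ m (g ∘ π) = occH ℓ m g := by
  funext l
  unfold occH
  apply Finset.card_bij (fun i _ => π i)
  · intro a ha
    simp only [Finset.mem_filter, Finset.mem_univ, true_and, Function.comp_apply] at ha ⊢
    exact ha
  · intro a _ b _ h
    exact π.injective h
  · intro b hb
    simp only [Finset.mem_filter, Finset.mem_univ, true_and, Function.comp_apply] at hb ⊢
    exact ⟨π.symm b, by simpa using hb, by simp⟩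

lemma pHOff_comp (ℓ m κ : ℕ) (p σ : ℝ) (d e : Fin m → Fin (ℓ + 1)) (π : Equiv.Perm (Fin m)) :
    pHOff ℓ m κ p σ (d ∘ π) (e ∘ π) = pHOff ℓ m κ p σ d e := by
  unfold pHOff
  congr 1
  have hnum : ∀ c : Fin (ℓ + 1),
      (∑ i : Fin m, AH σ ((d ∘ π) i) * MH ℓ κ p ((d ∘ π) i) c)
        = ∑ i : Fin m, AH σ (d i) * MH ℓ κ p (d i) c := fun c =>
    Equiv.sum_comp π (fun i => AH σ (d i) * MH ℓ κ p (d i) c)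
  have hden : (∑ i : Fin m, AH σ ((d ∘ π) i)) = ∑ i : Fin m, AH σ (d i) :=
    Equiv.sum_comp π (fun i => AH σ (d i))
  rw [← Equiv.sum_comp π (fun j => ∑ c : Fin (ℓ + 1),
      if c ≠ d j ∧ e = Function.update d j c then
        (∑ i : Fin m, AH σ (d i) * MH ℓ κ p (d i) c) / (∑ i : Fin m, AH σ (d i))
      else 0)]
  apply Finset.sum_congr rfl
  intro j _
  apply Finset.sum_congr rfl
  intro c _
  have hupd : (e ∘ π = Function.update (d ∘ π) j c) ↔ (e = Function.update d (π j) c) := by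
    have h1 : Function.update d (π j) c ∘ π = Function.update (d ∘ π) j c := by
      rw [Function.update_comp_equiv]
      simp
    constructor
    · intro h
      exact comp_perm_cancel π (by rw [h, h1])
    · intro h
      rw [h, ← h1]
  rw [hnum c, hden]
  simp only [Function.comp_apply]
  rw [if_congr (and_congr Iff.rfl hupd) rfl rfl]

lemma pHmat_comp (ℓ m κ : ℕ) (p σ : ℝ) (d e : Fin m → Fin (ℓ + 1)) (π : Equiv.Perm (Fin m)) :
    pHmat ℓ m κ p σ (d ∘ π) (e ∘ π) = pHmat ℓ m κ p σ d e := by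
  have hcomp : ∀ f : Fin m → Fin (ℓ + 1), (f ∘ π.symm) ∘ π = f := by
    intro f; funext x; simp
  have hiff : e ∘ π = d ∘ π ↔ e = d :=
    ⟨fun h => comp_perm_cancel π h, fun h => by rw [h]⟩
  unfold pHmat
  by_cases h : e = d
  · rw [if_pos (hiff.mpr h), if_pos h]
    congr 1
    apply Finset.sum_nbij' (fun f => f ∘ π.symm) (fun f => f ∘ π)
    · intro a ha
      simp only [Finset.mem_filter, Finset.mem_univ, true_and] at ha ⊢
      intro hcontra
      exact ha (by rw [← hcomp a, hcontra])
    · intro a ha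
      simp only [Finset.mem_filter, Finset.mem_univ, true_and] at ha ⊢
      intro hcontra
      exact ha (comp_perm_cancel π hcontra)
    · intro a _; exact hcomp a
    · intro a _; funext x; simp
    · intro a _
      conv_lhs => rw [← hcomp a]
      exact pHOff_comp ℓ m κ p σ d (a ∘ π.symm) π
  · rw [if_neg (fun hc => h (hiff.mp hc)), if_neg h]
    exact pHOff_comp ℓ m κ p σ d e π

theorem pH_lumpable
    (ℓ m κ : ℕ) (hℓ : 1 ≤ ℓ) (hm : 1 ≤ m) (hκ : 2 ≤ κ)
    (p : ℝ) (hp : 0 < p ∧ p < 1) (σ : ℝ) (hσ : 1 < σ)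
    (o : Fin (ℓ + 1) → ℕ) (ho : ∑ l, o l = m)
    (d e : Fin m → Fin (ℓ + 1)) (hde : occH ℓ m d = occH ℓ m e) :
    ∑ f ∈ Finset.univ.filter (fun f : Fin m → Fin (ℓ + 1) => occH ℓ m f = o),
        pHmat ℓ m κ p σ d f
      = ∑ f ∈ Finset.univ.filter (fun f : Fin m → Fin (ℓ + 1) => occH ℓ m f = o),
          pHmat ℓ m κ p σ e f := by

  -- construct a permutation π with e ∘ π = d
  have hcard : ∀ l : Fin (ℓ + 1),
      Fintype.card {i : Fin m // d i = l} = Fintype.card {i : Fin m // e i = l} := by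
    intro l
    rw [Fintype.card_subtype, Fintype.card_subtype]
    exact congrFun hde l
  have fe : ∀ l : Fin (ℓ + 1), (d ⁻¹' {l}) ≃ (e ⁻¹' {l}) := by
    intro l
    refine (Equiv.subtypeEquivRight (fun x => by simp)).trans
      (((Fintype.equivOfCardEq (hcard l)).trans
        (Equiv.subtypeEquivRight (fun x => by simp))))
  let π : Fin m ≃ Fin m := Equiv.ofFiberEquiv fe
  have hπ : ∀ i, e (π i) = d i := fun i => Equiv.ofFiberEquiv_map fe i
  have hd : d = e ∘ π := funext fun i => (hπ i).symm
  rw [hd]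
  apply Finset.sum_nbij' (fun f => f ∘ π.symm) (fun f => f ∘ π)
  · intro a ha
    simp only [Finset.mem_filter, Finset.mem_univ, true_and] at ha ⊢
    rw [occH_comp ℓ m a π.symm]
    exact ha
  · intro a ha
    simp only [Finset.mem_filter, Finset.mem_univ, true_and] at ha ⊢
    rw [occH_comp ℓ m a π]
    exact ha
  · intro a _; funext x; simp
  · intro a _; funext x; simp
  · intro a _
    have : a = (a ∘ π.symm) ∘ π := by funext x; simp
    conv_lhs => rw [this]
    exact pHmat_comp ℓ m κ p σ e (a ∘ π.symm) π

end
end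

section
/- The mutation map ℳ_H is non-decreasing with respect to the Hamming class: for all b, c ∈ {0,…,ℓ} and all u_1,…,u_ℓ ∈ [0,1], if b ≤ c then ℳ_H(b, u_1,…,u_ℓ) ≤ ℳ_H(c, u_1,…,u_ℓ). -/
open Finset

noncomputable section

/-- The mutation map `ℳ_H`. -/
def calMH (ℓ κ : ℕ) (p : ℝ) (b : ℕ) (u : Fin ℓ → ℝ) : ℕ :=
  b - (Finset.univ.filter (fun k : Fin ℓ => (k : ℕ) < b ∧ u k < p / (κ : ℝ))).card
    + (Finset.univ.filter
        (fun k : Fin ℓ => b ≤ (k : ℕ) ∧ 1 - p * (1 - 1 / (κ : ℝ)) < u k)).card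

/-! Moving the Hamming class from `b` up to `c` removes at most one flip per position in
`[b, c)`: such a position loses its chance to flip down (`u k < p / κ`) and its chance to
flip up (`u k > 1 - p (1 - 1/κ)`), and these two events are disjoint since `p ≤ 1`.
So the two counts change by at most `c - b` in total, which the shift `b ↦ c` pays for. -/

theorem Finset.card_filter_eq_add_of_iff_or {α : Type*} [DecidableEq α] (s : Finset α)
    {p q r : α → Prop} [DecidablePred p] [DecidablePred q] [DecidablePred r]
    (hpqr : ∀ a, p a ↔ q a ∨ r a) (hqr : ∀ a, q a → ¬ r a) :
    #(s.filter p) = #(s.filter q) + #(s.filter r) := by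
  rw [← card_union_of_disjoint (disjoint_filter.2 fun a _ => hqr a), ← filter_or]
  exact congrArg card (filter_congr fun a _ => hpqr a)

theorem Fin.card_filter_le_sub_of_val_mem_Ico {n b c : ℕ} (P : Fin n → Prop) [DecidablePred P]
    (hP : ∀ k, P k → (k : ℕ) ∈ Ico b c) : #{k | P k} ≤ c - b := by
  simpa using card_le_card_of_injOn (fun k : Fin n => (k : ℕ))
    (fun k hk => hP k (mem_filter.1 hk).2) Fin.val_injective.injOn

theorem Fin.monotone_sub_card_filter_lt_add_card_filter_le {n : ℕ} {L H : Fin n → Prop}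
    [DecidablePred L] [DecidablePred H] (hLH : ∀ k, L k → ¬ H k) :
    Monotone fun b : ℕ =>
      b - #{k : Fin n | (k : ℕ) < b ∧ L k} + #{k : Fin n | b ≤ (k : ℕ) ∧ H k} := by
  intro b c hbc
  have hlow : #{k : Fin n | (k : ℕ) < c ∧ L k}
      = #{k : Fin n | (k : ℕ) < b ∧ L k} + #{k : Fin n | b ≤ (k : ℕ) ∧ (k : ℕ) < c ∧ L k} :=
    card_filter_eq_add_of_iff_or _ (fun k => by grind) (fun k => by grind)
  have hhigh : #{k : Fin n | b ≤ (k : ℕ) ∧ H k}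
      = #{k : Fin n | c ≤ (k : ℕ) ∧ H k} + #{k : Fin n | b ≤ (k : ℕ) ∧ (k : ℕ) < c ∧ H k} :=
    card_filter_eq_add_of_iff_or _ (fun k => by grind) (fun k => by grind)
  have hmid : #{k : Fin n | b ≤ (k : ℕ) ∧ (k : ℕ) < c ∧ (L k ∨ H k)}
      = #{k : Fin n | b ≤ (k : ℕ) ∧ (k : ℕ) < c ∧ L k}
        + #{k : Fin n | b ≤ (k : ℕ) ∧ (k : ℕ) < c ∧ H k} :=
    card_filter_eq_add_of_iff_or _ (fun k => by tauto) (fun k h h' => hLH k h.2.2 h'.2.2)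
  have hle_b : #{k : Fin n | (k : ℕ) < b ∧ L k} ≤ b - 0 :=
    card_filter_le_sub_of_val_mem_Ico _ fun k hk => mem_Ico.2 ⟨k.val.zero_le, hk.1⟩
  have hle_cb : #{k : Fin n | b ≤ (k : ℕ) ∧ (k : ℕ) < c ∧ (L k ∨ H k)} ≤ c - b :=
    card_filter_le_sub_of_val_mem_Ico _ fun k hk => mem_Ico.2 ⟨hk.1, hk.2.1⟩
  dsimp only
  omega

theorem calMH_monotone_general
    (ℓ κ : ℕ)
    (p : ℝ) (hp : 0 < p ∧ p < 1)
    (b c : ℕ) (hbc : b ≤ c)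
    (u : Fin ℓ → ℝ) :
    calMH ℓ κ p b u ≤ calMH ℓ κ p c u := by
  have hdisjoint : ∀ k, u k < p / κ → ¬ 1 - p * (1 - 1 / κ) < u k := fun k hlow hhigh => by
    have : p * (1 - 1 / κ) = p - p / κ := by ring
    linarith [hp.2]
  exact Fin.monotone_sub_card_filter_lt_add_card_filter_le hdisjoint hbc

theorem calMH_monotone
    (ℓ κ : ℕ) (hℓ : 1 ≤ ℓ) (hκ : 2 ≤ κ)
    (p : ℝ) (hp : 0 < p ∧ p < 1)
    (b c : ℕ) (hb : b ≤ ℓ) (hc : c ≤ ℓ) (hbc : b ≤ c)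
    (u : Fin ℓ → ℝ) (hu : ∀ k, 0 ≤ u k ∧ u k ≤ 1) :
    calMH ℓ κ p b u ≤ calMH ℓ κ p c u :=
  calMH_monotone_general ℓ κ p hp b c hbc u

end
end

section
/- In the neutral case σ = 1, the coupling map Φ_H is non-decreasing with respect to the componentwise order on {0,…,ℓ}^m: for all d, e ∈ {0,…,ℓ}^m and all r ∈ ℛ, if d(i) ≤ e(i) for every i, then Φ_H(d,r)(i) ≤ Φ_H(e,r)(i) for every i. -/
open Finset

noncomputable section

/-!
With `σ = 1` every fitness equals `1`, so the roulette wheel selects the index `⌊s m⌋` whatever the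
population is: `d` and `e` select the same index. Since `ℳ_H(b, u)` is non-decreasing in `b`,
the new `j`-th component of `Φ_H(d, r)` is at most that of `Φ_H(e, r)`; the others are those of
`d ≤ e`.
-/

/- Moving the cut from `b` to `b + 1` adds one to `b` and moves locus `b` from the `Q`-count to the
`P`-count; since `P b` and `Q b` exclude each other, the net change is at least `0`. -/
theorem monotone_sub_card_add_card {n : ℕ} {P Q : Fin n → Prop} [DecidablePred P]
    [DecidablePred Q] (hPQ : ∀ k, P k → ¬ Q k) :
    Monotone fun b : ℕ =>
      b - #{k : Fin n | (k : ℕ) < b ∧ P k} + #{k : Fin n | b ≤ (k : ℕ) ∧ Q k} := by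
  refine monotone_nat_of_le_succ fun b => ?_
  have hP_le (c : ℕ) : #{k : Fin n | (k : ℕ) < c ∧ P k} ≤ c :=
    (card_le_card_of_injOn Fin.val (fun k hk => by simp_all) Fin.val_injective.injOn).trans
      (card_range c).le
  have hb : #{k : Fin n | (k : ℕ) = b} ≤ 1 :=
    card_le_one.2 fun x hx y hy => Fin.ext (by simp only [mem_filter] at hx hy; omega)
  have key : #{k : Fin n | (k : ℕ) < b + 1 ∧ P k} + #{k : Fin n | b ≤ (k : ℕ) ∧ Q k}
      ≤ #{k : Fin n | (k : ℕ) < b ∧ P k} + #{k : Fin n | b + 1 ≤ (k : ℕ) ∧ Q k}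
        + #{k : Fin n | (k : ℕ) = b} := by
    simp only [card_filter, ← sum_add_distrib]
    refine sum_le_sum fun k _ => ?_
    have := hPQ k
    split_ifs <;> grind
  have := hP_le b
  have := hP_le (b + 1)
  omega

/- The two thresholds of `ℳ_H` satisfy `p/κ ≤ 1 - p(1 - 1/κ)` as soon as `p ≤ 1`, so no locus
mutates in both directions. -/
theorem calMH_monotone_s9 (ℓ κ : ℕ) {p : ℝ} (hp : p ≤ 1) (u : Fin ℓ → ℝ) :
    Monotone fun b => calMH ℓ κ p b u :=
  monotone_sub_card_add_card fun k hlo hhi => by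
    have : p / κ ≤ 1 - p * (1 - 1 / κ) := by rw [mul_one_sub, div_eq_mul_one_div]; linarith
    linarith

theorem sum_AH_one {α : Type*} (s : Finset α) (f : α → ℕ) : ∑ x ∈ s, AH 1 (f x) = #s := by
  simp [AH]

theorem val_eq_floor_of_AH_one {m : ℕ} {d : Fin m → ℕ} {s : ℝ} {i : Fin m} (hs : 0 ≤ s)
    (h : ∑ i' ∈ univ.filter (fun i' => i' < i), AH 1 (d i') ≤ s * ∑ i', AH 1 (d i') ∧
      s * ∑ i', AH 1 (d i') < ∑ i' ∈ univ.filter (fun i' => i' ≤ i), AH 1 (d i')) :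
    (i : ℕ) = ⌊s * m⌋₊ := by
  simp only [sum_AH_one, filter_gt_eq_Iio, filter_ge_eq_Iic, Fin.card_Iio, Fin.card_Iic,
    card_univ, Fintype.card_fin, Nat.cast_add, Nat.cast_one] at h
  exact ((Nat.floor_eq_iff (by positivity)).2 h).symm

theorem PhiH_monotone_neutral_general
    (ℓ m κ : ℕ)
    (p : ℝ) (hp : 0 < p ∧ p < 1)
    -- the selection map `𝒮_H` in the neutral case `σ = 1`, characterized by
    -- `Σ_{i' < 𝒮_H(d,s)} A_H(d(i')) ≤ s·Σ_{i'} A_H(d(i')) < Σ_{i' ≤ 𝒮_H(d,s)} A_H(d(i'))`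
    (S : (Fin m → ℕ) → ℝ → Fin m)
    (hS : ∀ (d : Fin m → ℕ) (s : ℝ), (∀ i, d i ≤ ℓ) → 0 ≤ s → s < 1 →
      (∑ i' ∈ Finset.univ.filter (fun i' => i' < S d s), AH 1 (d i'))
          ≤ s * ∑ i' : Fin m, AH 1 (d i') ∧
        s * (∑ i' : Fin m, AH 1 (d i'))
          < ∑ i' ∈ Finset.univ.filter (fun i' => i' ≤ S d s), AH 1 (d i')) :
    -- `Φ_H(d,(s,i,j,u)) = d(j ← ℳ_H(d(𝒮_H(d,s)),u))` is non-decreasing in `d`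
    ∀ d e : Fin m → ℕ, (∀ i, d i ≤ ℓ) → (∀ i, e i ≤ ℓ) → (∀ i, d i ≤ e i) →
      ∀ s : ℝ, 0 ≤ s → s < 1 → ∀ _i j : Fin m,
      ∀ u : Fin ℓ → ℝ, (∀ k, 0 ≤ u k ∧ u k ≤ 1) →
      ∀ i' : Fin m,
        Function.update d j (calMH ℓ κ p (d (S d s)) u) i'
          ≤ Function.update e j (calMH ℓ κ p (e (S e s)) u) i' := by
  intro d e hd he hde s hs0 hs1 _i j u _ i'
  have hsel : S d s = S e s := Fin.ext <|
    (val_eq_floor_of_AH_one hs0 (hS d s hd hs0 hs1)).trans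
      (val_eq_floor_of_AH_one hs0 (hS e s he hs0 hs1)).symm
  rw [hsel]
  exact update_le_update_iff.2
    ⟨calMH_monotone_s9 ℓ κ hp.2.le u (hde _), fun k _ => hde k⟩ i'

theorem PhiH_monotone_neutral
    (ℓ m κ : ℕ) (hℓ : 1 ≤ ℓ) (hm : 1 ≤ m) (hκ : 2 ≤ κ)
    (p : ℝ) (hp : 0 < p ∧ p < 1)
    -- the selection map `𝒮_H` in the neutral case `σ = 1`, characterized by
    -- `Σ_{i' < 𝒮_H(d,s)} A_H(d(i')) ≤ s·Σ_{i'} A_H(d(i')) < Σ_{i' ≤ 𝒮_H(d,s)} A_H(d(i'))`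
    (S : (Fin m → ℕ) → ℝ → Fin m)
    (hS : ∀ (d : Fin m → ℕ) (s : ℝ), (∀ i, d i ≤ ℓ) → 0 ≤ s → s < 1 →
      (∑ i' ∈ Finset.univ.filter (fun i' => i' < S d s), AH 1 (d i'))
          ≤ s * ∑ i' : Fin m, AH 1 (d i') ∧
        s * (∑ i' : Fin m, AH 1 (d i'))
          < ∑ i' ∈ Finset.univ.filter (fun i' => i' ≤ S d s), AH 1 (d i')) :
    -- `Φ_H(d,(s,i,j,u)) = d(j ← ℳ_H(d(𝒮_H(d,s)),u))` is non-decreasing in `d`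
    ∀ d e : Fin m → ℕ, (∀ i, d i ≤ ℓ) → (∀ i, e i ≤ ℓ) → (∀ i, d i ≤ e i) →
      ∀ s : ℝ, 0 ≤ s → s < 1 → ∀ _i j : Fin m,
      ∀ u : Fin ℓ → ℝ, (∀ k, 0 ≤ u k ∧ u k ≤ 1) →
      ∀ i' : Fin m,
        Function.update d j (calMH ℓ κ p (d (S d s)) u) i'
          ≤ Function.update e j (calMH ℓ κ p (e (S e s)) u) i' :=
  PhiH_monotone_neutral_general ℓ m κ p hp S hS
end
end

section
/- The lumped mutation matrix M_H is reversible with respect to the binomial law ℬ = Binomial(ℓ, 1−1/κ): for all b, c ∈ {0,…,ℓ}, ℬ(b)·M_H(b,c) = ℬ(c)·M_H(c,b), where ℬ(b) = C(ℓ,b)(1−1/κ)^b(1/κ)^{ℓ−b}. Consequently ℬ is an invariant probability measure for the Markov chain on {0,…,ℓ} with transition matrix M_H. -/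
open Finset

noncomputable section

/-- The binomial law `ℬ(ℓ, 1 − 1/κ)`. -/
def binB (ℓ κ : ℕ) (b : ℕ) : ℝ :=
  (Nat.choose ℓ b : ℝ) * (1 - 1 / (κ : ℝ)) ^ b * (1 / (κ : ℝ)) ^ (ℓ - b)

lemma tri_key (a h k m : ℕ) :
    ((a+h+k+m).choose (a+h) * ((k+m).choose k * (a+h).choose h)) *
      (a.factorial * h.factorial * k.factorial * m.factorial)
    = (a+h+k+m).factorial := by
  have h1 := Nat.choose_mul_factorial_mul_factorial (show a+h ≤ a+h+k+m by omega)
  have h2 := Nat.choose_mul_factorial_mul_factorial (show k ≤ k+m by omega)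
  have h3 := Nat.choose_mul_factorial_mul_factorial (show h ≤ a+h by omega)
  have e1 : a+h+k+m - (a+h) = k+m := by omega
  have e2 : k+m-k = m := by omega
  have e3 : a+h-h = a := by omega
  rw [e1] at h1; rw [e2] at h2; rw [e3] at h3
  rw [← h1, ← h2, ← h3]; ring

lemma tri_eq (a h k m : ℕ) :
    (a+h+k+m).choose (a+h) * ((k+m).choose k * (a+h).choose h)
    = (a+h+k+m).choose (a+k) * ((h+m).choose h * (a+k).choose k) := by
  have k1 := tri_key a h k m
  have k2 := tri_key a k h m
  have e : a+k+h+m = a+h+k+m := by omega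
  rw [e] at k2
  have hpos : 0 < a.factorial * h.factorial * k.factorial * m.factorial := by positivity
  apply Nat.eq_of_mul_eq_mul_right hpos
  rw [k1, ← k2]; ring

-- detailed balance
lemma MH_rev (ℓ κ : ℕ) (p : ℝ) (b c : ℕ) (hb : b ≤ ℓ) (hc : c ≤ ℓ) :
    binB ℓ κ b * MH ℓ κ p b c = binB ℓ κ c * MH ℓ κ p c b := by
  unfold MH binB
  rw [← Finset.sum_product', ← Finset.sum_product', Finset.mul_sum, Finset.mul_sum]
  simp only [mul_ite, mul_zero]
  rw [← Finset.sum_filter, ← Finset.sum_filter]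
  refine Finset.sum_nbij' (fun x => (x.2, x.1)) (fun x => (x.2, x.1)) ?_ ?_ ?_ ?_ ?_
  · rintro ⟨k, h⟩ hkh
    simp only [Finset.mem_filter, Finset.mem_product, Finset.mem_range] at hkh ⊢
    omega
  · rintro ⟨k, h⟩ hkh
    simp only [Finset.mem_filter, Finset.mem_product, Finset.mem_range] at hkh ⊢
    omega
  · intro x _; rfl
  · intro x _; rfl
  · rintro ⟨k, h⟩ hkh
    simp only [Finset.mem_filter, Finset.mem_product, Finset.mem_range] at hkh
    obtain ⟨⟨hk, hh⟩, heq⟩ := hkh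
    -- set a := b - h, m := ℓ - b - k
    obtain ⟨a, m, rfl, rfl, hℓeq⟩ : ∃ a m, b = a + h ∧ c = a + k ∧ ℓ = a + h + k + m := by
      refine ⟨b - h, ℓ - b - k, by omega, by omega, by omega⟩
    subst hℓeq
    dsimp only
    have e1 : a + h + k + m - (a + h) = k + m := by omega
    have e2 : a + h + k + m - (a + k) = h + m := by omega
    have e3 : a + h - h = a := by omega
    have e4 : a + k - k = a := by omega
    have e5 : k + m - k = m := by omega
    have e6 : h + m - h = m := by omega
    rw [e1, e2, e3, e4, e5, e6]
    have hch : ((a+h+k+m).choose (a+h) : ℝ) * (((k+m).choose k : ℝ) * ((a+h).choose h : ℝ))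
        = ((a+h+k+m).choose (a+k) : ℝ) * (((h+m).choose h : ℝ) * ((a+k).choose k : ℝ)) := by
      exact_mod_cast congrArg (Nat.cast (R := ℝ)) (tri_eq a h k m)
    have hq : (1 - 1 / (κ:ℝ)) ^ (a+h) * (1 / (κ:ℝ)) ^ (k+m)
        * ((p * (1 - 1/(κ:ℝ))) ^ k * (1 - p * (1 - 1/(κ:ℝ))) ^ m
            * (p / (κ:ℝ)) ^ h * (1 - p / (κ:ℝ)) ^ a) = (1 - 1 / (κ:ℝ)) ^ (a+k) * (1 / (κ:ℝ)) ^ (h+m)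
        * ((p * (1 - 1/(κ:ℝ))) ^ h * (1 - p * (1 - 1/(κ:ℝ))) ^ m
            * (p / (κ:ℝ)) ^ k * (1 - p / (κ:ℝ)) ^ a) := by
      simp only [mul_pow, div_pow, one_div]; ring
    linear_combination ((1 - 1 / (κ:ℝ)) ^ (a+h) * (1 / (κ:ℝ)) ^ (k+m)
        * ((p * (1 - 1/(κ:ℝ))) ^ k * (1 - p * (1 - 1/(κ:ℝ))) ^ m
            * (p / (κ:ℝ)) ^ h * (1 - p / (κ:ℝ)) ^ a)) * hch
      + (((a+h+k+m).choose (a+k) : ℝ) * (((h+m).choose h : ℝ) * ((a+k).choose k : ℝ))) * hq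

-- row sums are one
lemma MH_rowsum (ℓ κ : ℕ) (p : ℝ) (c : ℕ) (hc : c ≤ ℓ) :
    ∑ b ∈ Finset.range (ℓ + 1), MH ℓ κ p c b = 1 := by
  unfold MH
  rw [Finset.sum_comm]
  -- now ∑ k ∑ b ∑ h ; swap inner two
  have : ∀ k ∈ Finset.range (ℓ - c + 1),
      (∑ b ∈ Finset.range (ℓ + 1), ∑ h ∈ Finset.range (c + 1),
        (if (k : ℤ) - (h : ℤ) = (b : ℤ) - (c : ℤ) then
          (Nat.choose (ℓ - c) k : ℝ) * (Nat.choose c h : ℝ)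
            * (p * (1 - 1 / (κ : ℝ))) ^ k * (1 - p * (1 - 1 / (κ : ℝ))) ^ (ℓ - c - k)
            * (p / (κ : ℝ)) ^ h * (1 - p / (κ : ℝ)) ^ (c - h)
        else 0))
      = ((Nat.choose (ℓ - c) k : ℝ) * (p * (1 - 1 / (κ : ℝ))) ^ k
          * (1 - p * (1 - 1 / (κ : ℝ))) ^ (ℓ - c - k))
        * ∑ h ∈ Finset.range (c + 1),
            (Nat.choose c h : ℝ) * (p / (κ : ℝ)) ^ h * (1 - p / (κ : ℝ)) ^ (c - h) := by
    intro k hk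
    rw [Finset.sum_comm, Finset.mul_sum]
    refine Finset.sum_congr rfl ?_
    intro h hh
    simp only [Finset.mem_range] at hk hh
    have hconv : ∀ b : ℕ, ((k : ℤ) - (h : ℤ) = (b : ℤ) - (c : ℤ)) ↔ b = c + k - h := by
      intro b; omega
    calc (∑ b ∈ Finset.range (ℓ + 1),
          (if (k : ℤ) - (h : ℤ) = (b : ℤ) - (c : ℤ) then
            (Nat.choose (ℓ - c) k : ℝ) * (Nat.choose c h : ℝ)
              * (p * (1 - 1 / (κ : ℝ))) ^ k * (1 - p * (1 - 1 / (κ : ℝ))) ^ (ℓ - c - k)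
              * (p / (κ : ℝ)) ^ h * (1 - p / (κ : ℝ)) ^ (c - h)
          else 0))
        = ∑ b ∈ Finset.range (ℓ + 1),
          (if b = c + k - h then
            (Nat.choose (ℓ - c) k : ℝ) * (Nat.choose c h : ℝ)
              * (p * (1 - 1 / (κ : ℝ))) ^ k * (1 - p * (1 - 1 / (κ : ℝ))) ^ (ℓ - c - k)
              * (p / (κ : ℝ)) ^ h * (1 - p / (κ : ℝ)) ^ (c - h)
          else 0) := by
          refine Finset.sum_congr rfl fun b _ => ?_
          rw [if_congr (hconv b) rfl rfl]
      _ = _ := by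
          rw [Finset.sum_ite_eq' (Finset.range (ℓ + 1))]
          rw [if_pos (by simp only [Finset.mem_range]; omega)]
          ring
  rw [Finset.sum_congr rfl this, ← Finset.sum_mul]
  have b1 : ∑ k ∈ Finset.range (ℓ - c + 1),
      (Nat.choose (ℓ - c) k : ℝ) * (p * (1 - 1 / (κ : ℝ))) ^ k
        * (1 - p * (1 - 1 / (κ : ℝ))) ^ (ℓ - c - k) = 1 := by
    have hbin := add_pow (p * (1 - 1 / (κ : ℝ))) (1 - p * (1 - 1 / (κ : ℝ))) (ℓ - c)
    rw [show (p * (1 - 1 / (κ : ℝ)) + (1 - p * (1 - 1 / (κ : ℝ)))) = (1:ℝ) by ring, one_pow] at hbin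
    conv_rhs => rw [hbin]
    exact Finset.sum_congr rfl fun k _ => by ring
  have b2 : ∑ h ∈ Finset.range (c + 1),
      (Nat.choose c h : ℝ) * (p / (κ : ℝ)) ^ h * (1 - p / (κ : ℝ)) ^ (c - h) = 1 := by
    have hbin := add_pow (p / (κ : ℝ)) (1 - p / (κ : ℝ)) c
    rw [show (p / (κ : ℝ) + (1 - p / (κ : ℝ))) = (1:ℝ) by ring, one_pow] at hbin
    conv_rhs => rw [hbin]
    exact Finset.sum_congr rfl fun k _ => by ring
  rw [b1, b2, mul_one]

theorem MH_reversible_binomial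
    (ℓ κ : ℕ) (hℓ : 1 ≤ ℓ) (hκ : 2 ≤ κ) (p : ℝ) (hp : 0 < p ∧ p < 1) :
    (∀ b c : ℕ, b ≤ ℓ → c ≤ ℓ →
      binB ℓ κ b * MH ℓ κ p b c = binB ℓ κ c * MH ℓ κ p c b) ∧
    (∀ c : ℕ, c ≤ ℓ →
      ∑ b ∈ Finset.range (ℓ + 1), binB ℓ κ b * MH ℓ κ p b c = binB ℓ κ c) := by
  constructor
  · exact fun b c hb hc => MH_rev ℓ κ p b c hb hc
  · intro c hc
    have : ∑ b ∈ Finset.range (ℓ + 1), binB ℓ κ b * MH ℓ κ p b c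
        = ∑ b ∈ Finset.range (ℓ + 1), binB ℓ κ c * MH ℓ κ p c b := by
      refine Finset.sum_congr rfl fun b hb => ?_
      exact MH_rev ℓ κ p b c (by simp only [Finset.mem_range] at hb; omega) hc
    rw [this, ← Finset.mul_sum, MH_rowsum ℓ κ p c hc, mul_one]


end
end

section
/- Fix a ∈ (0,∞) and consider, for each ℓ and q, the Markov chain (Y_n)_{n≥0} on {0,…,ℓ} with transition matrix M_H, and let τ_0 = inf{n ≥ 0 : Y_n = 0}. Then limsup (1/ℓ)·ln E(τ_0 | Y_0 = ℓ) ≤ ln κ in the regime ℓ → ∞, q → 0 with ℓq → a. -/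
/-!
`M_H` is the distance to the master sequence when each of the `ℓ` letters is independently
resampled uniformly among `κ` letters with probability `p`. After `s` steps a letter is uniform
unless it was never resampled, which happens with probability `(1 - p) ^ s`; hence from distance `b`
the chain is at `0` after `s` steps with probability `u_s ^ b v_s ^ (ℓ - b) ≥ u_s ^ ℓ`, where
`u_s = (1 - (1 - p) ^ s) / κ ≤ v_s`. Restarting every `s` steps shows that the expected hitting
time of `0` is at most `s / u_s ^ ℓ = s (κ / (1 - (1 - p) ^ s)) ^ ℓ`. Take `s = ℓ²`: as `pℓ` tends to
`κa / (κ - 1) > 0`, `(1 - p) ^ ℓ² ≤ exp (-pℓ · ℓ) → 0`, so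
`(1/ℓ) log E τ₀ ≤ 2 log ℓ / ℓ + log (κ / (1 - (1 - p) ^ ℓ²)) → log κ`.
-/

open Filter Finset

noncomputable section

section HittingTime

variable {L : ℕ} {P : ℕ → ℕ → ℝ} {T : ℕ → ℝ}

theorem one_le_of_hitting_eq (hP : ∀ b c, 0 ≤ P b c)
    (hT : ∀ b, 1 ≤ b → b ≤ L → T b = 1 + ∑ c ∈ range (L + 1), P b c * T c)
    (hTnn : ∀ b ≤ L, 0 ≤ T b) {b : ℕ} (hb1 : 1 ≤ b) (hb : b ≤ L) : 1 ≤ T b := by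
  rw [hT b hb1 hb]
  refine le_add_of_nonneg_right (sum_nonneg fun c hc => mul_nonneg (hP b c) (hTnn c ?_))
  exact Nat.lt_succ_iff.1 (mem_range.1 hc)

/-- With `f s b = P_b(Y_s = 0) ≤ P_b(τ₀ ≤ s)` and `S ≥ max T`, this is
`E_b τ₀ ≤ s + P_b(τ₀ > s) · S`. -/
theorem le_add_one_sub_mul_of_hitting_eq (hP : ∀ b c, 0 ≤ P b c)
    (hrow : ∀ b, 1 ≤ b → b ≤ L → ∑ c ∈ range (L + 1), P b c = 1) (hT0 : T 0 = 0)
    (hT : ∀ b, 1 ≤ b → b ≤ L → T b = 1 + ∑ c ∈ range (L + 1), P b c * T c)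
    {f : ℕ → ℕ → ℝ} (hf0 : ∀ b, 1 ≤ b → f 0 b ≤ 0) (hf1 : ∀ s b, f s b ≤ 1)
    (hf : ∀ s b, 1 ≤ b → b ≤ L → f (s + 1) b = ∑ c ∈ range (L + 1), P b c * f s c)
    {S : ℝ} (hS0 : 0 ≤ S) (hS : ∀ c ≤ L, T c ≤ S) (s : ℕ) :
    ∀ b ≤ L, T b ≤ s + (1 - f s b) * S := by
  have at_zero : ∀ s : ℕ, T 0 ≤ s + (1 - f s 0) * S := fun s => by
    rw [hT0]
    exact add_nonneg (Nat.cast_nonneg s) (mul_nonneg (sub_nonneg.2 (hf1 s 0)) hS0)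
  induction s with
  | zero =>
    intro b hb
    rcases Nat.eq_zero_or_pos b with rfl | hb1
    · exact at_zero 0
    · nlinarith [hf0 b hb1, hS b hb]
  | succ s ih =>
    intro b hb
    rcases Nat.eq_zero_or_pos b with rfl | hb1
    · exact at_zero (s + 1)
    calc T b = 1 + ∑ c ∈ range (L + 1), P b c * T c := hT b hb1 hb
      _ ≤ 1 + ∑ c ∈ range (L + 1), P b c * (s + (1 - f s c) * S) := by
        gcongr with c hc
        · exact hP b c
        · exact ih c (Nat.lt_succ_iff.1 (mem_range.1 hc))
      _ = 1 + (s + S) * ∑ c ∈ range (L + 1), P b c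
            - S * ∑ c ∈ range (L + 1), P b c * f s c := by
        rw [mul_sum, mul_sum, add_sub_assoc, ← sum_sub_distrib]
        exact congrArg _ (sum_congr rfl fun c _ => by ring)
      _ = (s + 1 : ℕ) + (1 - f (s + 1) b) * S := by
        rw [hrow b hb1 hb, ← hf s b hb1 hb]
        push_cast
        ring

theorem le_div_of_hitting_eq (hP : ∀ b c, 0 ≤ P b c)
    (hrow : ∀ b, 1 ≤ b → b ≤ L → ∑ c ∈ range (L + 1), P b c = 1) (hT0 : T 0 = 0)
    (hT : ∀ b, 1 ≤ b → b ≤ L → T b = 1 + ∑ c ∈ range (L + 1), P b c * T c)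
    {f : ℕ → ℕ → ℝ} (hf0 : ∀ b, 1 ≤ b → f 0 b ≤ 0) (hf1 : ∀ s b, f s b ≤ 1)
    (hf : ∀ s b, 1 ≤ b → b ≤ L → f (s + 1) b = ∑ c ∈ range (L + 1), P b c * f s c)
    {s : ℕ} {m : ℝ} (hm : 0 < m) (hfm : ∀ b ≤ L, m ≤ f s b) {b : ℕ} (hb : b ≤ L) :
    T b ≤ s / m := by
  set S := (range (L + 1)).sup' nonempty_range_add_one T
  have hS : ∀ c ≤ L, T c ≤ S := fun c hc => le_sup' T (mem_range.2 (Nat.lt_succ_of_le hc))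
  have hS0 : 0 ≤ S := hT0 ▸ hS 0 (Nat.zero_le L)
  have hSS : S ≤ s + (1 - m) * S := by
    refine sup'_le _ _ fun c hc => ?_
    have hc := Nat.lt_succ_iff.1 (mem_range.1 hc)
    calc T c ≤ s + (1 - f s c) * S :=
          le_add_one_sub_mul_of_hitting_eq hP hrow hT0 hT hf0 hf1 hf hS0 hS s c hc
      _ ≤ s + (1 - m) * S := by gcongr; exact hfm c hc
  rw [le_div_iff₀ hm]
  nlinarith [hS b hb]

end HittingTime

section MutationMatrix

variable (L κ : ℕ) {p : ℝ}

theorem MH_nonneg (hp0 : 0 ≤ p) (hp1 : p ≤ 1) (b c : ℕ) : 0 ≤ MH L κ p b c := by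
  have hκ0 : (0 : ℝ) ≤ 1 / κ := by positivity
  have hκ1 : 1 / (κ : ℝ) ≤ 1 := by simpa using Nat.cast_inv_le_one (α := ℝ) κ
  have hκ1' : 0 ≤ 1 - 1 / (κ : ℝ) := by linarith
  have hw0 : 0 ≤ 1 - p * (1 - 1 / κ) := by nlinarith
  have hr0 : 0 ≤ 1 - p / κ := by rw [div_eq_mul_one_div]; nlinarith
  refine sum_nonneg fun k _ => sum_nonneg fun h _ => ?_
  split_ifs
  · positivity
  · exact le_rfl

/-- The `L - b` correct and the `b` wrong letters mutate independently, hence the binomial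
theorem. -/
theorem sum_MH_mul_pow_mul_pow (p u v : ℝ) {b : ℕ} (hb : b ≤ L) :
    ∑ c ∈ range (L + 1), MH L κ p b c * (u ^ c * v ^ (L - c)) =
      (p / κ * v + (1 - p / κ) * u) ^ b
        * (p * (1 - 1 / κ) * u + (1 - p * (1 - 1 / κ)) * v) ^ (L - b) := by
  set w := p * (1 - 1 / (κ : ℝ))
  set r := p / (κ : ℝ)
  have hdiag : ∑ c ∈ range (L + 1), MH L κ p b c * (u ^ c * v ^ (L - c))
      = ∑ k ∈ range (L - b + 1), ∑ h ∈ range (b + 1),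
          ((L - b).choose k * b.choose h * w ^ k * (1 - w) ^ (L - b - k) * r ^ h * (1 - r) ^ (b - h))
            * (u ^ ((b - h) + k) * v ^ ((L - b - k) + h)) := by
    simp only [MH, sum_mul, ite_mul, zero_mul]
    rw [sum_comm]
    refine sum_congr rfl fun k hk => ?_
    rw [sum_comm]
    refine sum_congr rfl fun h hh => ?_
    simp only [mem_range] at hk hh
    rw [sum_eq_single (b + k - h)]
    · rw [if_pos (by omega), show (b - h) + k = b + k - h by omega,
        show (L - b - k) + h = L - (b + k - h) by omega]
    · intro c _ hne
      rw [if_neg (by omega)]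
    · intro hmem
      exact absurd (mem_range.2 (by omega)) hmem
  rw [hdiag, add_pow, add_pow, sum_mul_sum]
  conv_rhs => rw [sum_comm]
  refine sum_congr rfl fun k _ => sum_congr rfl fun h _ => ?_
  simp only [mul_pow, pow_add]
  ring

theorem sum_MH_eq_one (p : ℝ) {b : ℕ} (hb : b ≤ L) : ∑ c ∈ range (L + 1), MH L κ p b c = 1 := by
  simpa using sum_MH_mul_pow_mul_pow L κ p 1 1 hb

def probWrongToRight (p : ℝ) (s : ℕ) : ℝ := (1 - (1 - p) ^ s) / κ

def probRightToRight (p : ℝ) (s : ℕ) : ℝ := (1 + (κ - 1) * (1 - p) ^ s) / κ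

variable {κ}

theorem sum_MH_mul_prob (hκ : κ ≠ 0) (s : ℕ) {b : ℕ} (hb : b ≤ L) :
    ∑ c ∈ range (L + 1), MH L κ p b c
        * (probWrongToRight κ p s ^ c * probRightToRight κ p s ^ (L - c)) =
      probWrongToRight κ p (s + 1) ^ b * probRightToRight κ p (s + 1) ^ (L - b) := by
  have hκ' : (κ : ℝ) ≠ 0 := Nat.cast_ne_zero.2 hκ
  rw [sum_MH_mul_pow_mul_pow L κ p _ _ hb]
  unfold probWrongToRight probRightToRight
  congr 2 <;> field_simp <;> ring

theorem probWrongToRight_nonneg (hp0 : 0 ≤ p) (hp1 : p ≤ 1) (s : ℕ) :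
    0 ≤ probWrongToRight κ p s := by
  have : (1 - p) ^ s ≤ 1 := pow_le_one₀ (by linarith) (by linarith)
  unfold probWrongToRight
  exact div_nonneg (by linarith) (Nat.cast_nonneg κ)

theorem probWrongToRight_pos (hκ : κ ≠ 0) (hp0 : 0 < p) (hp1 : p ≤ 1) {s : ℕ} (hs : s ≠ 0) :
    0 < probWrongToRight κ p s := by
  have : (1 - p) ^ s < 1 := pow_lt_one₀ (by linarith) (by linarith) hs
  unfold probWrongToRight
  exact div_pos (by linarith) (Nat.cast_pos.2 (Nat.pos_of_ne_zero hκ))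

theorem probWrongToRight_le_probRightToRight (hp1 : p ≤ 1) (s : ℕ) :
    probWrongToRight κ p s ≤ probRightToRight κ p s := by
  have : 0 ≤ (1 - p) ^ s := pow_nonneg (by linarith) s
  unfold probWrongToRight probRightToRight
  gcongr
  nlinarith

theorem probRightToRight_le_one (hκ : 1 ≤ κ) (hp0 : 0 ≤ p) (hp1 : p ≤ 1) (s : ℕ) :
    probRightToRight κ p s ≤ 1 := by
  have h1 : (1 - p) ^ s ≤ 1 := pow_le_one₀ (by linarith) (by linarith)
  have hκ' : (1 : ℝ) ≤ κ := Nat.one_le_cast.2 hκ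
  unfold probRightToRight
  rw [div_le_one (by linarith)]
  nlinarith

theorem MH_hitting_le (hκ : 1 ≤ κ) (hp0 : 0 < p) (hp1 : p ≤ 1) {T : ℕ → ℝ} (hT0 : T 0 = 0)
    (hT : ∀ b, 1 ≤ b → b ≤ L → T b = 1 + ∑ c ∈ range (L + 1), MH L κ p b c * T c)
    {t : ℕ} (ht : t ≠ 0) {b : ℕ} (hb : b ≤ L) :
    T b ≤ t * (κ / (1 - (1 - p) ^ t)) ^ L := by
  have hκ0 : κ ≠ 0 := Nat.one_le_iff_ne_zero.1 hκ
  set u := probWrongToRight κ p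
  set v := probRightToRight κ p
  have hu0 := probWrongToRight_nonneg (κ := κ) hp0.le hp1
  have huv := probWrongToRight_le_probRightToRight (κ := κ) hp1
  have hv1 := probRightToRight_le_one hκ hp0.le hp1
  have hf1 : ∀ s c, u s ^ c * v s ^ (L - c) ≤ 1 := fun s c =>
    mul_le_one₀ (pow_le_one₀ (hu0 s) ((huv s).trans (hv1 s))) (pow_nonneg ((hu0 s).trans (huv s)) _)
      (pow_le_one₀ ((hu0 s).trans (huv s)) (hv1 s))
  have hf0 : ∀ c, 1 ≤ c → u 0 ^ c * v 0 ^ (L - c) ≤ 0 := fun c hc => by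
    simp [u, probWrongToRight, zero_pow (Nat.one_le_iff_ne_zero.1 hc)]
  have hfm : ∀ c ≤ L, u t ^ L ≤ u t ^ c * v t ^ (L - c) := fun c hc => by
    calc u t ^ L = u t ^ c * u t ^ (L - c) := by rw [← pow_add, Nat.add_sub_cancel' hc]
      _ ≤ u t ^ c * v t ^ (L - c) :=
        mul_le_mul_of_nonneg_left (pow_le_pow_left₀ (hu0 t) (huv t) _) (pow_nonneg (hu0 t) _)
  have hbound := le_div_of_hitting_eq (MH_nonneg L κ hp0.le hp1) (fun c _ hc => sum_MH_eq_one L κ p hc)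
    hT0 hT hf0 hf1 (fun s c _ hc => (sum_MH_mul_prob L hκ0 s hc).symm)
    (pow_pos (probWrongToRight_pos hκ0 hp0 hp1 ht) L) hfm hb
  rwa [div_eq_mul_inv, ← inv_pow, probWrongToRight, inv_div] at hbound

end MutationMatrix

theorem mul_div_sub_one_mem_Ioo {κ q : ℝ} (hκ : 1 < κ) (hq0 : 0 < q) (hq1 : q < 1 - 1 / κ) :
    κ * q / (κ - 1) ∈ Set.Ioo 0 1 := by
  refine ⟨div_pos (by positivity) (by linarith), (div_lt_one (by linarith)).2 ?_⟩
  have : κ * (1 - 1 / κ) = κ - 1 := by field_simp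
  nlinarith

theorem inv_mul_log_le_of_le_mul_pow {T t y : ℝ} {L : ℕ} (hL : L ≠ 0) (hT : 0 < T) (ht : 0 < t)
    (hy : 0 < y) (h : T ≤ t * y ^ L) : 1 / L * Real.log T ≤ Real.log t / L + Real.log y := by
  have hL' : (0 : ℝ) < L := Nat.cast_pos.2 (Nat.pos_of_ne_zero hL)
  have hlog : Real.log T ≤ Real.log t + L * Real.log y := by
    rw [← Real.log_pow, ← Real.log_mul ht.ne' (pow_pos hy L).ne']
    exact Real.log_le_log hT h
  rw [one_div_mul_eq_div, div_le_iff₀ hL', add_mul, div_mul_cancel₀ _ hL'.ne']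
  linarith

theorem inv_mul_log_MH_hitting_le {L κ : ℕ} {p : ℝ} (hL : L ≠ 0) (hκ : 1 ≤ κ) (hp0 : 0 < p)
    (hp1 : p ≤ 1) {T : ℕ → ℝ} (hT0 : T 0 = 0)
    (hT : ∀ b, 1 ≤ b → b ≤ L → T b = 1 + ∑ c ∈ range (L + 1), MH L κ p b c * T c)
    (hTpos : 0 < T L) :
    1 / L * Real.log (T L) ≤ 2 * (Real.log L / L) + Real.log (κ / (1 - (1 - p) ^ (L ^ 2))) := by
  have hbound := MH_hitting_le L hκ hp0 hp1 hT0 hT (pow_ne_zero 2 hL) le_rfl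
  have hlt : (1 - p) ^ (L ^ 2) < 1 := pow_lt_one₀ (by linarith) (by linarith) (pow_ne_zero 2 hL)
  have hκ' : (0 : ℝ) < κ := Nat.cast_pos.2 hκ
  have := inv_mul_log_le_of_le_mul_pow hL hTpos (by positivity)
    (div_pos hκ' (sub_pos.2 hlt)) hbound
  rwa [Nat.cast_pow, Real.log_pow, Nat.cast_ofNat, mul_div_assoc] at this

theorem tendsto_one_sub_pow_nhds_zero {ι : Type*} {l : Filter ι} {p : ι → ℝ} {N : ι → ℕ}
    (hp : ∀ i, p i ≤ 1) (h : Tendsto (fun i => p i * N i) l atTop) :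
    Tendsto (fun i => (1 - p i) ^ N i) l (nhds 0) := by
  refine tendsto_of_tendsto_of_tendsto_of_le_of_le tendsto_const_nhds
    (Real.tendsto_exp_neg_atTop_nhds_zero.comp h) (fun i => pow_nonneg (by linarith [hp i]) _)
    fun i => ?_
  calc (1 - p i) ^ N i ≤ Real.exp (-p i) ^ N i :=
        pow_le_pow_left₀ (by linarith [hp i]) (Real.one_sub_le_exp_neg _) _
    _ = Real.exp (-(p i * N i)) := by rw [← Real.exp_nat_mul]; ring_nf

theorem hitting_time_upper_bound_general
    (κ : ℕ) (hκ : 2 ≤ κ)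
    (ℓ : ℕ → ℕ) (q : ℕ → ℝ)
    (hq : ∀ n, 0 < q n ∧ q n < 1 - 1 / (κ : ℝ))
    (hℓ : Tendsto ℓ atTop atTop)
    (a : ℝ) (ha : 0 < a)
    (hla : Tendsto (fun n => (ℓ n : ℝ) * q n) atTop (nhds a))
    (Texp : ℕ → ℕ → ℝ)
    (hT0 : ∀ n, Texp n 0 = 0)
    (hTeq : ∀ n b, 1 ≤ b → b ≤ ℓ n →
      Texp n b = 1 + ∑ c ∈ Finset.range (ℓ n + 1),
        MH (ℓ n) κ ((κ : ℝ) * q n / ((κ : ℝ) - 1)) b c * Texp n c)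
    (hTpos : ∀ n b, b ≤ ℓ n → 0 ≤ Texp n b) :
    Filter.limsup (fun n => (1 / (ℓ n : ℝ)) * Real.log (Texp n (ℓ n))) atTop
      ≤ Real.log (κ : ℝ) := by
  have hκ1 : (1 : ℝ) < κ := by exact_mod_cast hκ
  set p : ℕ → ℝ := fun n => (κ : ℝ) * q n / ((κ : ℝ) - 1)
  have hp : ∀ n, p n ∈ Set.Ioc 0 1 := fun n =>
    Set.Ioo_subset_Ioc_self (mul_div_sub_one_mem_Ioo hκ1 (hq n).1 (hq n).2)
  have hℓR : Tendsto (fun n => (ℓ n : ℝ)) atTop atTop := tendsto_natCast_atTop_atTop.comp hℓ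
  have hpℓ : Tendsto (fun n => p n * ((ℓ n ^ 2 : ℕ) : ℝ)) atTop atTop := by
    have hc : (0 : ℝ) < κ / (κ - 1) := div_pos (by linarith) (by linarith)
    refine ((hla.const_mul ((κ : ℝ) / (κ - 1))).pos_mul_atTop (mul_pos hc ha) hℓR).congr
      fun n => ?_
    simp only [p]
    push_cast
    ring
  have hlim : Tendsto (fun n => 2 * (Real.log (ℓ n) / ℓ n)
      + Real.log (κ / (1 - (1 - p n) ^ (ℓ n ^ 2)))) atTop (nhds (Real.log κ)) := by
    have hlogℓ := (Real.isLittleO_log_id_atTop.tendsto_div_nhds_zero.comp hℓR).const_mul 2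
    have hpow := tendsto_one_sub_pow_nhds_zero (fun n => (hp n).2) hpℓ
    have hlogκ := ((tendsto_const_nhds (x := (κ : ℝ))).div (hpow.const_sub 1)
      (by norm_num)).log (by positivity)
    simpa using hlogℓ.add hlogκ
  have hT1 : ∀ᶠ n in atTop, 1 ≤ ℓ n ∧ 1 ≤ Texp n (ℓ n) :=
    (hℓ.eventually_ge_atTop 1).mono fun n hn => ⟨hn,
      one_le_of_hitting_eq (MH_nonneg _ _ (hp n).1.le (hp n).2) (hTeq n) (hTpos n) hn le_rfl⟩
  refine (limsup_le_limsup ?_ ?_ hlim.isBoundedUnder_le).trans hlim.limsup_eq.le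
  · filter_upwards [hT1] with n ⟨hn, hTn⟩
    exact inv_mul_log_MH_hitting_le (Nat.one_le_iff_ne_zero.1 hn) (by omega) (hp n).1 (hp n).2
      (hT0 n) (hTeq n) (by linarith)
  · exact isCoboundedUnder_le_of_eventually_le _
      (hT1.mono fun n ⟨_, hTn⟩ => mul_nonneg (by positivity) (Real.log_nonneg hTn))

/-- `Texp n b` is the expected hitting time of `0` for the Markov chain on
`{0,…,ℓ n}` with transition matrix `M_H`, started at `b`; for a finite
irreducible chain it is the unique nonnegative solution of the system of
equations below. -/
theorem hitting_time_upper_bound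
    (κ : ℕ) (hκ : 2 ≤ κ)
    (ℓ : ℕ → ℕ) (q : ℕ → ℝ)
    (hℓ1 : ∀ n, 1 ≤ ℓ n)
    (hq : ∀ n, 0 < q n ∧ q n < 1 - 1 / (κ : ℝ))
    (hℓ : Tendsto ℓ atTop atTop) (hq0 : Tendsto q atTop (nhds 0))
    (a : ℝ) (ha : 0 < a)
    (hla : Tendsto (fun n => (ℓ n : ℝ) * q n) atTop (nhds a))
    (Texp : ℕ → ℕ → ℝ)
    (hT0 : ∀ n, Texp n 0 = 0)
    (hTeq : ∀ n b, 1 ≤ b → b ≤ ℓ n →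
      Texp n b = 1 + ∑ c ∈ Finset.range (ℓ n + 1),
        MH (ℓ n) κ ((κ : ℝ) * q n / ((κ : ℝ) - 1)) b c * Texp n c)
    (hTpos : ∀ n b, b ≤ ℓ n → 0 ≤ Texp n b) :
    Filter.limsup (fun n => (1 / (ℓ n : ℝ)) * Real.log (Texp n (ℓ n))) atTop
      ≤ Real.log (κ : ℝ) :=
  hitting_time_upper_bound_general κ hκ ℓ q hq hℓ a ha hla Texp hT0 hTeq hTpos

end
end
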